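/- arXiv:2605.12766 — 6 statements merged into one kernel-verified Lean document; each statement's English description precedes it below -/
import Mathlib

section
/- Let s ≥ 0, n = 2^s, and 0 ≤ k ≤ s. For every node u in ZMod n, the set of nodes reachable from u by adding a subset of the Bruck offsets {2^k, 2^(k+1), …, 2^(s−1)} (each offset used at most once), i.e. the set { u + ∑_{j=k}^{s−1} ε_j · 2^j : ε_j ∈ {0,1} }, is exactly the residue class of u modulo 2^k, i.e. the set { w ∈ ZMod n : ∃ c ∈ ZMod n, w = u + c · 2^k }. -/
/-! A sum of distinct offsets `2^j` with `j ≥ k` is visibly a multiple of `2^k`. Conversely,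
for `c : ZMod (2^s)` the natural number `N = c.val * 2^k` has no binary digits below position
`k`, so its digits at positions `k, …, s-1` sum to `N % 2^s`, which represents `c * 2^k`. -/

open Finset

namespace Nat

theorem sum_range_bit_mul_two_pow (m t : ℕ) :
    ∑ i ∈ range t, m / 2 ^ i % 2 * 2 ^ i = m % 2 ^ t := by
  induction t with
  | zero => simp [Nat.mod_one]
  | succ t ih => rw [sum_range_succ, ih, Nat.mod_pow_succ, Nat.mul_comm (2 ^ t)]

theorem mul_two_pow_div_two_pow_mod_two_of_lt (m : ℕ) {j k : ℕ} (hjk : j < k) :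
    m * 2 ^ k / 2 ^ j % 2 = 0 := by
  have hsplit : m * 2 ^ k = m * 2 ^ (k - j - 1) * 2 * 2 ^ j := by
    rw [Nat.mul_assoc, Nat.mul_assoc, ← Nat.pow_succ', ← Nat.pow_add]
    congr 2
    omega
  rw [hsplit, Nat.mul_div_cancel _ (Nat.two_pow_pos j), Nat.mul_mod_left]

theorem sum_Ico_bit_mul_two_pow_of_mul_two_pow (m : ℕ) {k t : ℕ} (hkt : k ≤ t) :
    ∑ j ∈ Ico k t, m * 2 ^ k / 2 ^ j % 2 * 2 ^ j = m * 2 ^ k % 2 ^ t := by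
  rw [← sum_range_bit_mul_two_pow, ← sum_range_add_sum_Ico _ hkt,
    sum_eq_zero (s := range k) fun j hj => by
      rw [mul_two_pow_div_two_pow_mod_two_of_lt m (mem_range.1 hj), Nat.zero_mul],
    Nat.zero_add]

end Nat

/-- Reachability content of the subring lemma: the set of nodes reachable from `u`
by adding a subset of the Bruck offsets `{2^k, …, 2^(s-1)}` (each at most once)
is exactly the residue class of `u` modulo `2^k` in `ZMod (2^s)`. -/
theorem bruck_reachable_eq_residue_class (s k : ℕ) (hk : k ≤ s) (u : ZMod (2 ^ s)) :
    {w : ZMod (2 ^ s) | ∃ ε : ℕ → ℕ, (∀ j, ε j ≤ 1) ∧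
        w = u + ∑ j ∈ Finset.Ico k s, (ε j : ZMod (2 ^ s)) * 2 ^ j} =
    {w : ZMod (2 ^ s) | ∃ c : ZMod (2 ^ s), w = u + c * 2 ^ k} := by
  ext w
  constructor
  · rintro ⟨ε, -, rfl⟩
    obtain ⟨c, hc⟩ : (2 : ZMod (2 ^ s)) ^ k ∣ ∑ j ∈ Ico k s, (ε j : ZMod (2 ^ s)) * 2 ^ j :=
      dvd_sum fun j hj => (pow_dvd_pow 2 (mem_Ico.1 hj).1).mul_left _
    exact ⟨c, by rw [hc, mul_comm]⟩
  · rintro ⟨c, rfl⟩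
    refine ⟨fun j => c.val * 2 ^ k / 2 ^ j % 2,
      fun j => Nat.le_of_lt_succ (Nat.mod_lt _ two_pos), ?_⟩
    have hdigits : ((∑ j ∈ Ico k s, c.val * 2 ^ k / 2 ^ j % 2 * 2 ^ j : ℕ) : ZMod (2 ^ s)) =
        c * 2 ^ k := by
      rw [Nat.sum_Ico_bit_mul_two_pow_of_mul_two_pow _ hk, ZMod.natCast_mod]
      push_cast
      rw [ZMod.natCast_zmod_val]
    rw [← hdigits]
    push_cast
    rfl
end

section
/- Fix naturals p ≥ 1 and s. Suppose r : Fin p → ℕ satisfies ∑_j r_j = s and minimizes ∑_j 2^(r_j) among all r' : Fin p → ℕ with ∑_j r'_j = s. Then the segment lengths of r differ pairwise by at most one: for all indices a and b, r_a ≤ r_b + 1. -/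
/-- For fixed number of segments `p ≥ 1`, every minimizer of `∑ j, 2^(r j)` subject
to `∑ j, r j = s` has segment lengths that pairwise differ by at most one. -/
theorem optimal_schedule_balanced (p s : ℕ) (hp : 1 ≤ p) (r : Fin p → ℕ)
    (hsum : ∑ j, r j = s)
    (hmin : ∀ r' : Fin p → ℕ, ∑ j, r' j = s → ∑ j, 2 ^ r j ≤ ∑ j, 2 ^ r' j) :
    ∀ a b : Fin p, r a ≤ r b + 1 := by
  intro a b
  by_contra h
  push_neg at h
  have hab : a ≠ b := by rintro rfl; omega
  have hra : r b + 2 ≤ r a := by omega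
  set r' : Fin p → ℕ := Function.update (Function.update r a (r a - 1)) b (r b + 1) with hr'
  have hr'a : r' a = r a - 1 := by
    simp [hr', Function.update_of_ne hab]
  have hr'b : r' b = r b + 1 := by simp [hr']
  have hr'other : ∀ j, j ≠ a → j ≠ b → r' j = r j := by
    intro j hja hjb
    simp [hr', Function.update_of_ne hjb, Function.update_of_ne hja]
  -- sums over the rest agree
  have key : ∀ (f : ℕ → ℕ), ∑ j, f (r' j) =
      f (r' a) + f (r' b) + ∑ j ∈ (Finset.univ \ {a, b}), f (r j) := by
    intro f
    have hmem : ({a, b} : Finset (Fin p)) ⊆ Finset.univ := Finset.subset_univ _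
    have hsplit : ∀ (g : Fin p → ℕ), ∑ j, g j =
        ∑ j ∈ ({a, b} : Finset (Fin p)), g j + ∑ j ∈ (Finset.univ \ {a, b}), g j := by
      intro g
      rw [← Finset.sum_sdiff hmem]; ring
    rw [hsplit (fun j => f (r' j))]
    congr 1
    · rw [Finset.sum_pair hab]
    · exact Finset.sum_congr rfl (fun j hj => by
        simp only [Finset.mem_sdiff, Finset.mem_insert, Finset.mem_singleton] at hj
        rw [hr'other j (by tauto) (by tauto)])
  have keyr : ∀ (f : ℕ → ℕ), ∑ j, f (r j) =
      f (r a) + f (r b) + ∑ j ∈ (Finset.univ \ {a, b}), f (r j) := by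
    intro f
    have hmem : ({a, b} : Finset (Fin p)) ⊆ Finset.univ := Finset.subset_univ _
    rw [← Finset.sum_sdiff hmem, Finset.sum_pair hab]; ring
  have hsum' : ∑ j, r' j = s := by
    have := key id
    have h2 := keyr id
    simp only [id] at this h2
    rw [this, hr'a, hr'b]
    omega
  have hlt : ∑ j, 2 ^ r' j < ∑ j, 2 ^ r j := by
    rw [key (fun n => 2 ^ n), keyr (fun n => 2 ^ n), hr'a, hr'b]
    have h1 : (2:ℕ) ^ (r a - 1) + 2 ^ (r b + 1) < 2 ^ r a + 2 ^ r b := by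
      obtain ⟨m, hm⟩ : ∃ m, r a = m + 1 := ⟨r a - 1, by omega⟩
      rw [hm]
      simp only [Nat.add_sub_cancel, pow_succ]
      have : (2:ℕ) ^ (r b + 1) ≤ 2 ^ m := Nat.pow_le_pow_right (by norm_num) (by omega)
      have hb : (2:ℕ) ^ r b ≥ 1 := Nat.one_le_two_pow
      have hp2 : (2:ℕ) ^ (r b + 1) = 2 * 2 ^ r b := by ring
      omega
    omega
  exact absurd (hmin r' hsum') (by omega)
end

section
/- Fix naturals p ≥ 1 and s, and write q = s / p (natural division) and t = s % p. For every r : Fin p → ℕ with ∑_j r_j = s, one has ∑_j 2^(r_j) ≥ (p − t) · 2^q + t · 2^(q+1), and this bound is attained by a tuple having p − t segments of length q and t segments of length q + 1. -/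
/-!
The line through `(q, 2^q)` and `(q + 1, 2^(q+1))` lies below `x ↦ 2^x` at every natural `x`:
`2^x ≥ 2^q (x - q + 1)`. Summing over the parts with `q = s / p` gives
`∑ 2^(r j) ≥ 2^q (s - p q + p) = (p - t) 2^q + t 2^(q+1)`, and the balanced tuple, whose parts
all lie in `{q, q + 1}` where the line meets `2^x`, attains the bound.
-/

open Finset

-- The secant inequality `2^q (x - q + 1) ≤ 2^x`, with `q 2^q` moved across to stay in `ℕ`.
lemma two_pow_mul_succ_le_add (q x : ℕ) : 2 ^ q * (x + 1) ≤ 2 ^ x + q * 2 ^ q := by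
  rcases le_or_gt q x with hqx | hxq
  · obtain ⟨d, rfl⟩ := Nat.exists_eq_add_of_le hqx
    have hd : d + 1 ≤ 2 ^ d := Nat.lt_two_pow_self
    calc 2 ^ q * (q + d + 1) = 2 ^ q * (d + 1) + q * 2 ^ q := by ring
      _ ≤ 2 ^ q * 2 ^ d + q * 2 ^ q := by gcongr
      _ = 2 ^ (q + d) + q * 2 ^ q := by rw [pow_add]
  · calc 2 ^ q * (x + 1) ≤ q * 2 ^ q := by rw [mul_comm]; gcongr; omega
      _ ≤ 2 ^ x + q * 2 ^ q := Nat.le_add_left _ _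

lemma two_pow_mul_sum_add_card_le {ι : Type*} (s : Finset ι) (r : ι → ℕ) (q : ℕ) :
    2 ^ q * (∑ j ∈ s, r j + #s) ≤ ∑ j ∈ s, 2 ^ r j + #s * q * 2 ^ q := by
  have hterm := sum_le_sum fun j (_ : j ∈ s) => two_pow_mul_succ_le_add q (r j)
  simpa [sum_add_distrib, mul_add, mul_sum, mul_assoc, mul_comm (2 ^ q) #s] using hterm

def balancedParts (p s : ℕ) (j : Fin p) : ℕ := if (j : ℕ) < s % p then s / p + 1 else s / p

section balancedParts

variable {p : ℕ} (s : ℕ)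

lemma sum_balancedParts_apply {M : Type*} [AddCommMonoid M] (hp : 0 < p) (f : ℕ → M) :
    ∑ j, f (balancedParts p s j) = (s % p) • f (s / p + 1) + (p - s % p) • f (s / p) := by
  have hcard := card_filter_add_card_filter_not (s := univ) fun j : Fin p => (j : ℕ) < s % p
  rw [Fin.card_filter_val_lt, card_univ, Fintype.card_fin,
    min_eq_right (Nat.mod_lt s hp).le] at hcard
  rw [← Nat.eq_sub_of_add_eq' hcard]
  simp only [balancedParts, apply_ite f, sum_ite, sum_const, Fin.card_filter_val_lt,
    min_eq_right (Nat.mod_lt s hp).le]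

lemma sum_balancedParts (hp : 0 < p) : ∑ j, balancedParts p s j = s := by
  have hsum := sum_balancedParts_apply s hp id
  simp only [id, smul_eq_mul] at hsum
  have hdiv : ((p * (s / p) + s % p : ℕ) : ℤ) = s := congrArg _ (Nat.div_add_mod s p)
  zify [(Nat.mod_lt s hp).le] at hsum hdiv ⊢
  linear_combination hsum + hdiv

lemma card_balancedParts_eq_succ (hp : 0 < p) :
    #{j | balancedParts p s j = s / p + 1} = s % p := by
  simp [card_filter, sum_balancedParts_apply s hp fun x => if x = s / p + 1 then 1 else 0]

lemma card_balancedParts_eq (hp : 0 < p) :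
    #{j | balancedParts p s j = s / p} = p - s % p := by
  simp [card_filter, sum_balancedParts_apply s hp fun x => if x = s / p then 1 else 0]

lemma balanced_value_add_eq (hp : 0 < p) :
    (p - s % p) * 2 ^ (s / p) + (s % p) * 2 ^ (s / p + 1) + p * (s / p) * 2 ^ (s / p) =
      2 ^ (s / p) * (s + p) := by
  have hdiv : ((p * (s / p) + s % p : ℕ) : ℤ) = s := congrArg _ (Nat.div_add_mod s p)
  zify [(Nat.mod_lt s hp).le] at hdiv ⊢
  linear_combination (2 : ℤ) ^ (s / p) * hdiv

end balancedParts

/-- General (non-divisible) case: with `q = s / p` and `t = s % p`, every tuple of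
`p` segment lengths summing to `s` satisfies
`∑ j, 2^(r j) ≥ (p - t) * 2^q + t * 2^(q+1)`, and the bound is attained by a tuple
having `p - t` segments of length `q` and `t` segments of length `q + 1`. -/
theorem general_optimal_value (p s : ℕ) (hp : 1 ≤ p) :
    (∀ r : Fin p → ℕ, ∑ j, r j = s →
        (p - s % p) * 2 ^ (s / p) + (s % p) * 2 ^ (s / p + 1) ≤ ∑ j, 2 ^ r j) ∧
    ∃ r : Fin p → ℕ,
      (∑ j, r j = s) ∧
      (∑ j, 2 ^ r j = (p - s % p) * 2 ^ (s / p) + (s % p) * 2 ^ (s / p + 1)) ∧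
      (Finset.univ.filter fun j => r j = s / p + 1).card = s % p ∧
      (Finset.univ.filter fun j => r j = s / p).card = p - s % p := by
  refine ⟨fun r hr => ?_, balancedParts p s, sum_balancedParts s hp, ?_,
    card_balancedParts_eq_succ s hp, card_balancedParts_eq s hp⟩
  · have key := two_pow_mul_sum_add_card_le univ r (s / p)
    rw [hr, card_univ, Fintype.card_fin, ← balanced_value_add_eq s hp] at key
    exact Nat.le_of_add_le_add_right key
  · rw [sum_balancedParts_apply s hp (2 ^ ·), smul_eq_mul, smul_eq_mul, add_comm]
end

section
/- Fix naturals p ≥ 1 and s with p ∣ s, and real constants α_s ≥ 0, c > 0, δ ≥ 0, and set R = p − 1. Define the cost of a schedule r : Fin p → ℕ with ∑_j r_j = s as C(r) = s·α_s + c·∑_j (2^(r_j) − 1) + R·δ. Then the minimum of C over all such schedules equals s·α_s + p·c·(2^(s/p) − 1) + R·δ, and it is attained exactly at the periodic schedule r_j = s/p for all j. -/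
lemma strictConvexOn_two_rpow : StrictConvexOn ℝ Set.univ (fun x : ℝ => (2 : ℝ) ^ x) := by
  refine ⟨convex_univ, ?_⟩
  intro x _ y _ hxy a b ha hb hab
  have hlog : Real.log 2 ≠ 0 := Real.log_ne_zero_of_pos_of_ne_one two_pos (by norm_num)
  have h := strictConvexOn_exp.2 (Set.mem_univ (Real.log 2 * x)) (Set.mem_univ (Real.log 2 * y))
    (by simpa [mul_left_cancel₀ hlog, imp_false] using fun h => hxy (mul_left_cancel₀ hlog h))
    ha hb hab
  simp only [smul_eq_mul] at h ⊢
  have h2 : ∀ z : ℝ, (2 : ℝ) ^ z = Real.exp (Real.log 2 * z) := fun z =>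
    Real.rpow_def_of_pos two_pos z
  rw [h2, h2, h2]
  convert h using 2
  ring

lemma jensen_key (p s : ℕ) (hp : 1 ≤ p) (hdvd : p ∣ s) (r : Fin p → ℕ) (hr : ∑ j, r j = s) :
    (p : ℝ) * (2 : ℝ) ^ (s / p) ≤ ∑ j, (2 : ℝ) ^ (r j) ∧
      ((∑ j, (2 : ℝ) ^ (r j)) = (p : ℝ) * (2 : ℝ) ^ (s / p) ↔ ∀ j, r j = s / p) := by
  have hp0 : (0 : ℝ) < (p : ℝ) := by exact_mod_cast hp
  set w : Fin p → ℝ := fun _ => (p : ℝ)⁻¹ with hw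
  have hwpos : ∀ i ∈ Finset.univ (α := Fin p), 0 < w i := fun i _ => inv_pos.2 hp0
  have h₁ : ∑ i : Fin p, w i = 1 := by
    simp [hw, Finset.card_univ, mul_inv_cancel₀ (ne_of_gt hp0)]
  have hmem : ∀ i ∈ Finset.univ (α := Fin p), ((r i : ℝ)) ∈ (Set.univ : Set ℝ) :=
    fun i _ => Set.mem_univ _
  have hm : ∑ i : Fin p, w i • ((r i : ℕ) : ℝ) = ((s / p : ℕ) : ℝ) := by
    rw [Nat.cast_div hdvd (ne_of_gt hp0)]
    simp only [hw, smul_eq_mul, ← Finset.mul_sum]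
    rw [← Nat.cast_sum, hr]
    field_simp
  -- pow to rpow
  have hpowr : ∀ n : ℕ, (2 : ℝ) ^ n = (2 : ℝ) ^ ((n : ℕ) : ℝ) := fun n =>
    (Real.rpow_natCast 2 n).symm
  have hJ := strictConvexOn_two_rpow.convexOn.map_sum_le (fun i _ => (hwpos i (by simp)).le)
    h₁ hmem (p := fun i => (r i : ℝ))
  rw [hm] at hJ
  have hsum : ∑ i : Fin p, w i • (2 : ℝ) ^ ((r i : ℝ)) = (p : ℝ)⁻¹ * ∑ j, (2 : ℝ) ^ (r j) := by
    simp only [hw, smul_eq_mul, ← Finset.mul_sum]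
    congr 1
    exact Finset.sum_congr rfl fun i _ => (Real.rpow_natCast 2 (r i))
  constructor
  · have := hJ
    rw [hsum] at this
    rw [hpowr (s / p)]
    calc (p : ℝ) * (2 : ℝ) ^ (((s / p : ℕ) : ℕ) : ℝ)
        ≤ (p : ℝ) * ((p : ℝ)⁻¹ * ∑ j, (2 : ℝ) ^ (r j)) := by
          exact mul_le_mul_of_nonneg_left this hp0.le
      _ = ∑ j, (2 : ℝ) ^ (r j) := by field_simp
  · have hiff := strictConvexOn_two_rpow.map_sum_eq_iff hwpos h₁ hmem
    rw [hm, hsum] at hiff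
    constructor
    · intro h
      have h' : (2 : ℝ) ^ (((s / p : ℕ) : ℕ) : ℝ) = (p : ℝ)⁻¹ * ∑ j, (2 : ℝ) ^ (r j) := by
        rw [h, ← hpowr]
        field_simp
      intro j
      have := (hiff.1 h') j (by simp)
      exact_mod_cast this
    · intro h
      have : ∀ j : Fin p, (2 : ℝ) ^ (r j) = (2 : ℝ) ^ (s / p) := fun j => by rw [h j]
      rw [Finset.sum_congr rfl fun j _ => this j]
      simp [Finset.card_univ, mul_comm]

/-- Theorem 1 (optimal periodic All-to-All schedule with its cost): with
`p = R + 1` segments, `p ∣ s`, and cost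
`C(r) = s·αs + c·∑ j (2^(r j) − 1) + R·δ`, the minimum cost over all schedules
`r` with `∑ j, r j = s` equals `s·αs + p·c·(2^(s/p) − 1) + R·δ`, and it is
attained exactly at the periodic schedule `r j = s / p`. -/
theorem periodic_schedule_optimal_cost (p s : ℕ) (hp : 1 ≤ p) (hdvd : p ∣ s)
    (αs c δ : ℝ) (hαs : 0 ≤ αs) (hc : 0 < c) (hδ : 0 ≤ δ) :
    (∀ r : Fin p → ℕ, ∑ j, r j = s →
        (s : ℝ) * αs + (p : ℝ) * c * ((2 : ℝ) ^ (s / p) - 1) + ((p - 1 : ℕ) : ℝ) * δ ≤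
          (s : ℝ) * αs + c * (∑ j, ((2 : ℝ) ^ (r j) - 1)) + ((p - 1 : ℕ) : ℝ) * δ) ∧
    (∀ r : Fin p → ℕ, ∑ j, r j = s →
        ((s : ℝ) * αs + c * (∑ j, ((2 : ℝ) ^ (r j) - 1)) + ((p - 1 : ℕ) : ℝ) * δ =
            (s : ℝ) * αs + (p : ℝ) * c * ((2 : ℝ) ^ (s / p) - 1) + ((p - 1 : ℕ) : ℝ) * δ ↔
          ∀ j, r j = s / p)) := by
  have hsum_sub : ∀ r : Fin p → ℕ,
      (∑ j, ((2 : ℝ) ^ (r j) - 1)) = (∑ j, (2 : ℝ) ^ (r j)) - (p : ℝ) := by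
    intro r
    rw [Finset.sum_sub_distrib]
    simp [Finset.card_univ]
  constructor
  · intro r hr
    have hkey := (jensen_key p s hp hdvd r hr).1
    have : (p : ℝ) * c * ((2 : ℝ) ^ (s / p) - 1) ≤ c * (∑ j, ((2 : ℝ) ^ (r j) - 1)) := by
      rw [hsum_sub]
      nlinarith
    linarith
  · intro r hr
    have hkey := (jensen_key p s hp hdvd r hr).2
    rw [hsum_sub]
    constructor
    · intro h
      apply hkey.1
      have : c * ((∑ j, (2 : ℝ) ^ (r j)) - (p : ℝ)) =
          c * ((p : ℝ) * (2 : ℝ) ^ (s / p) - (p : ℝ)) := by ring_nf; ring_nf at h; linarith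
      have h2 := mul_left_cancel₀ (ne_of_gt hc) this
      linarith
    · intro h
      rw [hkey.2 h]
      ring
end

section
/- Let s ≥ 1 and p ≥ 1 be naturals and m > 0 a real number, with segment costs f_RS(a,b) = (b − a + 1) · m / 2^(a+1) and f_AG(a,b) = (b − a + 1) · m / 2^(s−b). Consider partitions of {0,…,s−1} into p consecutive intervals. A partition P = ([a_1,b_1],…,[a_p,b_p]) minimizes the total AllGather cost ∑_j f_AG(a_j, b_j) if and only if its reflection P' = ([s−1−b_p, s−1−a_p],…,[s−1−b_1, s−1−a_1]) minimizes the total Reduce-Scatter cost ∑_j f_RS; moreover the two minimum values are equal. -/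
/-- Reduce-Scatter segment cost `f_RS(a,b) = (b − a + 1)·m / 2^(a+1)`. -/
noncomputable def fRS (m : ℝ) (a b : ℕ) : ℝ := ((b - a + 1 : ℕ) : ℝ) * m / 2 ^ (a + 1)

/-- AllGather segment cost `f_AG(a,b) = (b − a + 1)·m / 2^(s−b)`. -/
noncomputable def fAG (s : ℕ) (m : ℝ) (a b : ℕ) : ℝ := ((b - a + 1 : ℕ) : ℝ) * m / 2 ^ (s - b)

/-- `(A, B)` describes a partition of the steps `{0, …, s−1}` into `p` consecutive
abutting intervals `[A j, B j]`. -/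
def IsConsecutivePartition (s p : ℕ) (A B : Fin p → ℕ) : Prop :=
  (∀ j, A j ≤ B j) ∧
  (∀ h : 0 < p, A ⟨0, h⟩ = 0 ∧ B ⟨p - 1, Nat.sub_lt h Nat.one_pos⟩ = s - 1) ∧
  (∀ j : ℕ, ∀ h : j + 1 < p, A ⟨j + 1, h⟩ = B ⟨j, Nat.lt_of_succ_lt h⟩ + 1)

lemma B_le_of_part {s p : ℕ} {A B : Fin p → ℕ}
    (h : IsConsecutivePartition s p A B) (j : Fin p) : B j ≤ s - 1 := by
  obtain ⟨h1, h2, h3⟩ := h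
  have hp : 0 < p := j.pos
  have key : ∀ d n (hd : n + d < p), B ⟨n, by omega⟩ ≤ B ⟨n + d, hd⟩ := by
    intro d
    induction d with
    | zero => intro n hd; exact le_refl _
    | succ d ih =>
      intro n hd
      have hd1 : n + d < p := by omega
      have h4 : B ⟨n, by omega⟩ ≤ B ⟨n + d, hd1⟩ := ih n hd1
      have h5 : A ⟨n + d + 1, hd⟩ = B ⟨n + d, hd1⟩ + 1 := h3 (n + d) hd
      have h6 : A ⟨n + d + 1, hd⟩ ≤ B ⟨n + d + 1, hd⟩ := h1 _
      show B ⟨n, by omega⟩ ≤ B ⟨n + d + 1, hd⟩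
      omega
  have hk := key (p - 1 - j.val) j.val (by omega)
  have e1 : (⟨j.val, by omega⟩ : Fin p) = j := rfl
  have e2 : (⟨j.val + (p - 1 - j.val), by omega⟩ : Fin p)
      = ⟨p - 1, Nat.sub_lt hp Nat.one_pos⟩ := by
    apply Fin.ext; simp; omega
  rw [e1, e2] at hk
  rw [(h2 hp).2] at hk
  exact hk

lemma refl_part {s p : ℕ} (hp : 1 ≤ p) {A B : Fin p → ℕ}
    (h : IsConsecutivePartition s p A B) :
    IsConsecutivePartition s p (fun j => s - 1 - B (Fin.rev j)) (fun j => s - 1 - A (Fin.rev j)) := by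
  obtain ⟨h1, h2, h3⟩ := h
  have hBle : ∀ j, B j ≤ s - 1 := B_le_of_part ⟨h1, h2, h3⟩
  refine ⟨fun j => by have := h1 (Fin.rev j); simp only []; omega, fun hpp => ?_, fun j hj => ?_⟩
  · constructor
    · have e : Fin.rev (⟨0, hpp⟩ : Fin p) = ⟨p - 1, Nat.sub_lt hpp Nat.one_pos⟩ := by
        apply Fin.ext; simp only [Fin.val_rev]; try omega
      simp only [e, (h2 hpp).2]; omega
    · have e : Fin.rev (⟨p - 1, Nat.sub_lt hpp Nat.one_pos⟩ : Fin p) = ⟨0, hpp⟩ := by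
        apply Fin.ext; simp only [Fin.val_rev]; try omega
      simp only [e, (h2 hpp).1]; omega
  · have e1 : Fin.rev (⟨j + 1, hj⟩ : Fin p) = ⟨p - j - 2, by omega⟩ := by
      apply Fin.ext; simp only [Fin.val_rev]; try omega
    have e2 : Fin.rev (⟨j, Nat.lt_of_succ_lt hj⟩ : Fin p) = ⟨p - j - 2 + 1, by omega⟩ := by
      apply Fin.ext; simp only [Fin.val_rev]; try omega
    have h5 := h3 (p - j - 2) (by omega)
    have h6 := h1 ⟨p - j - 2 + 1, by omega⟩
    have h7 := hBle ⟨p - j - 2 + 1, by omega⟩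
    simp only [e1, e2, h5]
    omega

lemma fAG_eq_fRS (s : ℕ) (m : ℝ) {a b : ℕ} (hab : a ≤ b) (hb : b ≤ s - 1) (hs : 1 ≤ s) :
    fAG s m a b = fRS m (s - 1 - b) (s - 1 - a) := by
  unfold fAG fRS
  have h1 : (s - 1 - a) - (s - 1 - b) + 1 = b - a + 1 := by omega
  have h2 : (s - 1 - b) + 1 = s - b := by omega
  rw [h1, h2]

lemma sum_refl {s p : ℕ} (hs : 1 ≤ s) {A B : Fin p → ℕ} (m : ℝ)
    (h : IsConsecutivePartition s p A B) :
    ∑ j, fRS m (s - 1 - B (Fin.rev j)) (s - 1 - A (Fin.rev j)) = ∑ j, fAG s m (A j) (B j) := by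
  have hrev : ∑ j, fRS m (s - 1 - B (Fin.rev j)) (s - 1 - A (Fin.rev j))
      = ∑ j, fRS m (s - 1 - B j) (s - 1 - A j) :=
    Fintype.sum_bijective Fin.rev Fin.rev_bijective _ _ (fun j => rfl)
  rw [hrev]
  exact Finset.sum_congr rfl fun j _ =>
    (fAG_eq_fRS s m (h.1 j) (B_le_of_part h j) hs).symm

lemma sum_refl' {s p : ℕ} (hs : 1 ≤ s) (hp : 1 ≤ p) {A B : Fin p → ℕ} (m : ℝ)
    (h : IsConsecutivePartition s p A B) :
    ∑ j, fRS m (A j) (B j)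
      = ∑ j, fAG s m (s - 1 - B (Fin.rev j)) (s - 1 - A (Fin.rev j)) := by
  have h' := refl_part hp h
  have := sum_refl hs m h'
  rw [← this]
  refine Finset.sum_congr rfl fun j _ => ?_
  have hB := B_le_of_part h j
  have hA := h.1 j
  have hBr := B_le_of_part h (Fin.rev (Fin.rev j))
  have hAr := h.1 (Fin.rev (Fin.rev j))
  simp only [Fin.rev_rev]
  have e1 : s - 1 - (s - 1 - A j) = A j := by omega
  have e2 : s - 1 - (s - 1 - B j) = B j := by omega
  rw [e1, e2]


/-- A partition `(A, B)` of `{0, …, s−1}` into `p` consecutive intervals minimizes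
the total AllGather cost iff its reflection (interval `[a, b]` becomes
`[s−1−b, s−1−a]`, with the order of intervals reversed) minimizes the total
Reduce-Scatter cost; moreover the two (minimum) values are equal. -/
theorem allgather_opt_iff_reflected_reduce_scatter_opt (s p : ℕ) (hs : 1 ≤ s)
    (hp : 1 ≤ p) (m : ℝ) (hm : 0 < m) (A B : Fin p → ℕ)
    (hAB : IsConsecutivePartition s p A B) :
    ((∀ A' B' : Fin p → ℕ, IsConsecutivePartition s p A' B' →
        ∑ j, fAG s m (A j) (B j) ≤ ∑ j, fAG s m (A' j) (B' j)) ↔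
      (∀ A' B' : Fin p → ℕ, IsConsecutivePartition s p A' B' →
        ∑ j, fRS m (s - 1 - B (Fin.rev j)) (s - 1 - A (Fin.rev j)) ≤
          ∑ j, fRS m (A' j) (B' j))) ∧
    ∑ j, fAG s m (A j) (B j) =
      ∑ j, fRS m (s - 1 - B (Fin.rev j)) (s - 1 - A (Fin.rev j)) := by
  have hsum := sum_refl hs m hAB
  refine ⟨⟨fun hAG A' B' h' => ?_, fun hRS A' B' h' => ?_⟩, hsum.symm⟩
  · rw [hsum, sum_refl' hs hp m h']
    exact hAG _ _ (refl_part hp h')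
  · have h2 := hRS _ _ (refl_part hp h')
    rw [hsum] at h2
    rw [← sum_refl hs m h']
    exact h2
end

section
/- Fix naturals p ≥ 1 and s, and write q = s / p (natural division) and t = s % p. If r : Fin p → ℕ satisfies ∑_j r_j = s and minimizes ∑_j 2^(r_j) among all tuples with that sum, then exactly t of the values r_j equal q + 1 and the remaining p − t values equal q; in particular the multiset of optimal segment lengths is uniquely determined. -/
/-!
Moving one unit from a segment of length `b + 1` to one of length `a < b` keeps the total
and replaces `2 ^ a + 2 ^ (b + 1)` by the strictly smaller `2 ^ (a + 1) + 2 ^ b`, so in a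
minimizer any two lengths differ by at most one. All lengths then equal `m` or `m + 1`,
where `m` is attained; if `k` of them equal `m + 1`, then `s = p * m + k` with `k < p`, which
forces `m = s / p` and `k = s % p`.
-/

open Finset Function

section

variable {ι : Type*} [Fintype ι]

lemma sum_update_add [DecidableEq ι] {M : Type*} [AddCommMonoid M] (f : ι → M) (i : ι)
    (b : M) :
    ∑ k, update f i b k + f i = ∑ k, f k + b := by
  rw [sum_update_of_mem (mem_univ i), ← add_sum_erase univ f (mem_univ i),
    sdiff_singleton_eq_erase]
  abel

lemma sum_comp_update_update [DecidableEq ι] {M : Type*} [AddCommMonoid M] (g : ℕ → M)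
    (r : ι → ℕ) {i j : ι} (hij : i ≠ j) (a b : ℕ) :
    ∑ k, g (update (update r i a) j b k) + g (r i) + g (r j) =
      ∑ k, g (r k) + g a + g b := by
  have hj := sum_update_add (g ∘ update r i a) j (g b)
  have hi := sum_update_add (g ∘ r) i (g a)
  simp only [← comp_update, comp_apply, update_of_ne hij.symm] at hj hi
  rw [add_right_comm, hj, add_right_comm, hi]

lemma two_pow_add_two_pow_lt {a b : ℕ} (h : a < b) :
    2 ^ (a + 1) + 2 ^ b < 2 ^ a + 2 ^ (b + 1) := by
  have := Nat.pow_lt_pow_right (by norm_num : 1 < 2) h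
  rw [pow_succ, pow_succ]
  omega

lemma le_add_one_of_forall_sum_two_pow_le [DecidableEq ι] (r : ι → ℕ)
    (hmin : ∀ r' : ι → ℕ, ∑ k, r' k = ∑ k, r k → ∑ k, 2 ^ r k ≤ ∑ k, 2 ^ r' k) (i j : ι) :
    r i ≤ r j + 1 := by
  by_contra! h
  obtain ⟨b, hb⟩ : ∃ b, r i = b + 1 := ⟨r i - 1, by omega⟩
  have hij : i ≠ j := by rintro rfl; omega
  have hsum := sum_comp_update_update id r hij b (r j + 1)
  have hpow := sum_comp_update_update (2 ^ ·) r hij b (r j + 1)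
  have hlt := two_pow_add_two_pow_lt (show r j < b by omega)
  simp only [id, hb] at hsum hpow
  have := hmin (update (update r i b) j (r j + 1)) (by omega)
  omega

lemma sum_eq_card_mul_add_card_filter (r : ι → ℕ) {m : ℕ} (hr : ∀ j, r j = m ∨ r j = m + 1) :
    ∑ j, r j = Fintype.card ι * m + #{j | r j = m + 1} := by
  rw [card_filter, ← card_univ, ← smul_eq_mul, ← sum_const, ← sum_add_distrib]
  refine sum_congr rfl fun j _ => ?_
  rcases hr j with h | h <;> simp [h]

lemma card_filter_add_card_filter_eq_card (r : ι → ℕ) {m : ℕ}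
    (hr : ∀ j, r j = m ∨ r j = m + 1) :
    #{j | r j = m + 1} + #{j | r j = m} = Fintype.card ι := by
  rw [← card_univ, ← card_filter_add_card_filter_not (s := univ) fun j => r j = m + 1]
  congr 2
  ext j
  simp only [mem_filter, mem_univ, true_and]
  have := hr j
  omega

theorem card_filter_eq_mod_of_forall_le_add_one (r : ι → ℕ) (h : ∀ i j, r i ≤ r j + 1) :
    #{j | r j = (∑ k, r k) / Fintype.card ι + 1} = (∑ k, r k) % Fintype.card ι ∧
      #{j | r j = (∑ k, r k) / Fintype.card ι} =
        Fintype.card ι - (∑ k, r k) % Fintype.card ι := by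
  rcases isEmpty_or_nonempty ι with hι | hι
  · simp
  obtain ⟨i₀, -, hi₀⟩ := exists_min_image univ r univ_nonempty
  have hr : ∀ j, r j = r i₀ ∨ r j = r i₀ + 1 := fun j => by
    have := hi₀ j (mem_univ j)
    have := h j i₀
    omega
  have hsum := sum_eq_card_mul_add_card_filter r hr
  have hcard := card_filter_add_card_filter_eq_card r hr
  have hpos : 0 < #{j | r j = r i₀} := card_pos.2 ⟨i₀, by simp⟩
  obtain ⟨hdiv, hmod⟩ := (Nat.div_mod_unique (b := Fintype.card ι) (by omega)).2
    ⟨(add_comm _ _).trans hsum.symm, show #{j | r j = r i₀ + 1} < _ by omega⟩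
  rw [hdiv, hmod]
  omega

end

theorem optimal_multiset_unique_general (p s : ℕ) (r : Fin p → ℕ)
    (hsum : ∑ j, r j = s)
    (hmin : ∀ r' : Fin p → ℕ, ∑ j, r' j = s → ∑ j, 2 ^ r j ≤ ∑ j, 2 ^ r' j) :
    (Finset.univ.filter fun j => r j = s / p + 1).card = s % p ∧
    (Finset.univ.filter fun j => r j = s / p).card = p - s % p := by
  subst hsum
  simpa using card_filter_eq_mod_of_forall_le_add_one r
    (le_add_one_of_forall_sum_two_pow_le r hmin)

/-- Exact characterization of optimal segment lengths: with `q = s / p` and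
`t = s % p`, any minimizer of `∑ j, 2^(r j)` subject to `∑ j, r j = s` has
exactly `t` segments of length `q + 1` and the remaining `p − t` segments of
length `q`; the optimal multiset of segment lengths is uniquely determined. -/
theorem optimal_multiset_unique (p s : ℕ) (hp : 1 ≤ p) (r : Fin p → ℕ)
    (hsum : ∑ j, r j = s)
    (hmin : ∀ r' : Fin p → ℕ, ∑ j, r' j = s → ∑ j, 2 ^ r j ≤ ∑ j, 2 ^ r' j) :
    (Finset.univ.filter fun j => r j = s / p + 1).card = s % p ∧
    (Finset.univ.filter fun j => r j = s / p).card = p - s % p :=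
  optimal_multiset_unique_general p s r hsum hmin
end
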